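/- For every α ∈ (0,3) and x, y ∈ ℝ³ with x ≠ y, one has |x−y|^{−α} = C_α ∫₀^∞ r^{−(4+α)} ∫_{ℝ³} exp(−|x−z|²/r²) exp(−|y−z|²/r²) dz dr for a finite positive constant C_α depending only on α. -/
import Mathlib

open MeasureTheory Real

private lemma inner_gauss (r : ℝ) (hr : 0 < r) (x y : EuclideanSpace ℝ (Fin 3)) :
    (∫ z : EuclideanSpace ℝ (Fin 3),
        Real.exp (-‖x - z‖ ^ 2 / r ^ 2) * Real.exp (-‖y - z‖ ^ 2 / r ^ 2))
      = Real.exp (-‖x - y‖ ^ 2 / (2 * r ^ 2)) * ((π / 2) ^ ((3 : ℝ) / 2) * r ^ 3) := by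
  have hr2 : (0 : ℝ) < r ^ 2 := by positivity
  have hb : (0 : ℝ) < 2 / r ^ 2 := by positivity
  have key : ∀ z : EuclideanSpace ℝ (Fin 3),
      Real.exp (-‖x - z‖ ^ 2 / r ^ 2) * Real.exp (-‖y - z‖ ^ 2 / r ^ 2)
        = Real.exp (-‖x - y‖ ^ 2 / (2 * r ^ 2)) *
          Real.exp (-(2 / r ^ 2) * ‖(2⁻¹ : ℝ) • (x + y) - z‖ ^ 2) := by
    intro z
    rw [← Real.exp_add, ← Real.exp_add]
    congr 1
    have hm : (2⁻¹ : ℝ) • (x + y) - z = (2⁻¹ : ℝ) • ((x - z) + (y - z)) := by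
      module
    have hxy : (x - z) - (y - z) = x - y := by abel
    have hp := parallelogram_law_with_norm ℝ (x - z) (y - z)
    rw [hxy] at hp
    have hpar : ‖(x - z) + (y - z)‖ ^ 2
        = 2 * (‖x - z‖ ^ 2 + ‖y - z‖ ^ 2) - ‖x - y‖ ^ 2 := by
      rw [pow_two, pow_two, pow_two, pow_two]
      linarith [hp]
    have hnm : ‖(2⁻¹ : ℝ) • ((x - z) + (y - z))‖ ^ 2
        = (2⁻¹ : ℝ) ^ 2 * ‖(x - z) + (y - z)‖ ^ 2 := by
      rw [norm_smul, mul_pow]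
      norm_num
    rw [hm, hnm, hpar]
    field_simp
    ring
  calc
    (∫ z : EuclideanSpace ℝ (Fin 3),
        Real.exp (-‖x - z‖ ^ 2 / r ^ 2) * Real.exp (-‖y - z‖ ^ 2 / r ^ 2))
      = ∫ z : EuclideanSpace ℝ (Fin 3),
          Real.exp (-‖x - y‖ ^ 2 / (2 * r ^ 2)) *
            Real.exp (-(2 / r ^ 2) * ‖(2⁻¹ : ℝ) • (x + y) - z‖ ^ 2) := by
        simp_rw [key]
    _ = Real.exp (-‖x - y‖ ^ 2 / (2 * r ^ 2)) *
          ∫ z : EuclideanSpace ℝ (Fin 3),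
            Real.exp (-(2 / r ^ 2) * ‖(2⁻¹ : ℝ) • (x + y) - z‖ ^ 2) :=
        integral_const_mul _ _
    _ = Real.exp (-‖x - y‖ ^ 2 / (2 * r ^ 2)) *
          ∫ z : EuclideanSpace ℝ (Fin 3), Real.exp (-(2 / r ^ 2) * ‖z‖ ^ 2) := by
        rw [integral_sub_left_eq_self
          (fun z : EuclideanSpace ℝ (Fin 3) => Real.exp (-(2 / r ^ 2) * ‖z‖ ^ 2)) _
          ((2⁻¹ : ℝ) • (x + y))]
    _ = Real.exp (-‖x - y‖ ^ 2 / (2 * r ^ 2)) * (π / (2 / r ^ 2)) ^ ((3 : ℝ) / 2) := by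
        rw [GaussianFourier.integral_rexp_neg_mul_sq_norm hb, finrank_euclideanSpace_fin]
        norm_num
    _ = Real.exp (-‖x - y‖ ^ 2 / (2 * r ^ 2)) * ((π / 2) ^ ((3 : ℝ) / 2) * r ^ 3) := by
        congr 1
        rw [show π / (2 / r ^ 2) = (π / 2) * r ^ 2 by field_simp,
          Real.mul_rpow (by positivity) (by positivity), ← Real.rpow_natCast r 2,
          ← Real.rpow_mul hr.le, ← Real.rpow_natCast r 3]
        norm_num

set_option linter.unusedVariables false in
/-- Fefferman–de la Llave type representation formula for the inverse power law
potential `|x|^{-α}` in `ℝ³`, `α ∈ (0,3)`, using Gaussian bumps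
`χ_{(r,z)}(x) = exp(-|x-z|²/r²)`. -/
theorem fefferman_de_la_llave (α : ℝ) (hα0 : 0 < α) (hα3 : α < 3) :
    ∃ C : ℝ, 0 < C ∧ ∀ x y : EuclideanSpace ℝ (Fin 3), x ≠ y →
      ‖x - y‖ ^ (-α) =
        C * ∫ r in Set.Ioi (0 : ℝ),
          (r ^ (-(4 + α)) *
            ∫ z : EuclideanSpace ℝ (Fin 3),
              Real.exp (-‖x - z‖ ^ 2 / r ^ 2) * Real.exp (-‖y - z‖ ^ 2 / r ^ 2)) := by
  set K : ℝ := (π / 2) ^ ((3 : ℝ) / 2) * ((2 : ℝ) ^ (α / 2) * (1 / 2) * Real.Gamma (α / 2))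
    with hKdef
  have hΓ : 0 < Real.Gamma (α / 2) := Real.Gamma_pos_of_pos (by positivity)
  have hK : 0 < K := by
    have h1 : (0 : ℝ) < (π / 2) ^ ((3 : ℝ) / 2) := Real.rpow_pos_of_pos (by positivity) _
    have h2 : (0 : ℝ) < (2 : ℝ) ^ (α / 2) := Real.rpow_pos_of_pos (by norm_num) _
    positivity
  refine ⟨K⁻¹, inv_pos.mpr hK, fun x y hxy => ?_⟩
  have hd : 0 < ‖x - y‖ := by
    rw [norm_pos_iff]
    exact sub_ne_zero_of_ne hxy
  set d : ℝ := ‖x - y‖ with hddef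
  set g : ℝ → ℝ := fun u => u ^ (α - 1) * Real.exp (-(d ^ 2 / 2) * u ^ (2 : ℝ)) with hg
  have main : (∫ r in Set.Ioi (0 : ℝ),
      (r ^ (-(4 + α)) *
        ∫ z : EuclideanSpace ℝ (Fin 3),
          Real.exp (-‖x - z‖ ^ 2 / r ^ 2) * Real.exp (-‖y - z‖ ^ 2 / r ^ 2)))
      = K * d ^ (-α) := by
    have step1 : (∫ r in Set.Ioi (0 : ℝ),
        (r ^ (-(4 + α)) *
          ∫ z : EuclideanSpace ℝ (Fin 3),
            Real.exp (-‖x - z‖ ^ 2 / r ^ 2) * Real.exp (-‖y - z‖ ^ 2 / r ^ 2)))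
        = ∫ r in Set.Ioi (0 : ℝ),
            (π / 2) ^ ((3 : ℝ) / 2) * ((|(-1 : ℝ)| * r ^ ((-1 : ℝ) - 1)) • g (r ^ (-1 : ℝ))) := by
      refine setIntegral_congr_fun measurableSet_Ioi (fun r hr => ?_)
      have hr0 : (0 : ℝ) < r := hr
      rw [inner_gauss r hr0 x y]
      have h2 : (r ^ (-1 : ℝ)) ^ (α - 1) = r ^ (1 - α) := by
        rw [← Real.rpow_mul hr0.le]; ring_nf
      have h3 : (r ^ (-1 : ℝ)) ^ (2 : ℝ) = (r ^ 2)⁻¹ := by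
        rw [← Real.rpow_mul hr0.le, ← Real.rpow_natCast r 2, ← Real.rpow_neg hr0.le]
        norm_num
      have key : r ^ (-(4 + α)) * r ^ (3 : ℕ) = r ^ ((-1 : ℝ) - 1) * r ^ (1 - α) := by
        rw [← Real.rpow_natCast r 3, ← Real.rpow_add hr0, ← Real.rpow_add hr0]
        congr 1; ring
      rw [hg]
      simp only [smul_eq_mul, abs_neg, abs_one, one_mul, h2, h3]
      rw [show -(d ^ 2 / 2) * (r ^ 2)⁻¹ = -d ^ 2 / (2 * r ^ 2) by ring]
      calc r ^ (-(4 + α)) *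
            (Real.exp (-d ^ 2 / (2 * r ^ 2)) * ((π / 2) ^ ((3 : ℝ) / 2) * r ^ 3))
          = (π / 2) ^ ((3 : ℝ) / 2) *
              ((r ^ (-(4 + α)) * r ^ (3 : ℕ)) * Real.exp (-d ^ 2 / (2 * r ^ 2))) := by
            ring
        _ = (π / 2) ^ ((3 : ℝ) / 2) *
              (r ^ ((-1 : ℝ) - 1) * (r ^ (1 - α) * Real.exp (-d ^ 2 / (2 * r ^ 2)))) := by
            rw [key]; ring
    rw [step1, integral_const_mul,
      integral_comp_rpow_Ioi g (by norm_num : (-1 : ℝ) ≠ 0)]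
    have hgamma := integral_rpow_mul_exp_neg_mul_rpow (p := 2) (q := α - 1) (b := d ^ 2 / 2)
      (by norm_num) (by linarith) (by positivity)
    rw [hg]
    rw [hgamma]
    have hsimp : α - 1 + 1 = α := by ring
    rw [hsimp]
    have hpow : (d ^ 2 / 2 : ℝ) ^ (-α / 2) = d ^ (-α) * (2 : ℝ) ^ (α / 2) := by
      rw [Real.div_rpow (by positivity) (by norm_num : (0:ℝ) ≤ 2),
        ← Real.rpow_natCast d 2, ← Real.rpow_mul hd.le,
        show ((2:ℕ) : ℝ) * (-α / 2) = -α by push_cast; ring,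
        show (-α / 2 : ℝ) = -(α / 2) by ring,
        Real.rpow_neg (by norm_num : (0:ℝ) ≤ 2)]
      field_simp
    rw [hpow, hKdef]
    ring
  rw [main, ← mul_assoc, inv_mul_cancel₀ hK.ne', one_mul]
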